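/- Let D ⊂ ℝ² be measurable with finite measure and let χ_n be characteristic functions of measurable subsets Ω_n ⊂ D converging weak-* in L^∞(D) to a function χ which is almost everywhere a characteristic function of a set Ω. If f_n → f strongly in L²(D) and g_n ⇀ g weakly in L²(D), then ∫_D χ_n f_n g_n dx → ∫_D χ f g dx. -/

import Mathlib

/-!
Weak-* convergence of indicators `χₙ → χ` to an indicator upgrades to strong `L²` convergence
`χₙ f → χ f`: indeed `∫ (χₙ f - χ f)² = ∫ χₙ f² - 2 ∫ χₙ (χ f²) + ∫ χ f²`, whose limit vanishes
because `χ² = χ`. Hence `χₙ fₙ → χ f` strongly, and pairing a strongly convergent sequence with a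
weakly convergent one converges, since weakly convergent sequences are bounded (Banach–Steinhaus).
-/

open MeasureTheory Filter Topology

section InnerProductSpace

variable {𝕜 E : Type*} [RCLike 𝕜] [NormedAddCommGroup E] [InnerProductSpace 𝕜 E] [CompleteSpace E]

theorem exists_norm_le_of_forall_tendsto_inner {y : ℕ → E} {ℓ : E → 𝕜}
    (hy : ∀ z, Tendsto (fun n => inner 𝕜 (y n) z) atTop (𝓝 (ℓ z))) :
    ∃ C, ∀ n, ‖y n‖ ≤ C := by
  obtain ⟨C, hC⟩ := banach_steinhaus (g := fun n => innerSL 𝕜 (y n)) fun z => by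
    obtain ⟨c, hc⟩ := (hy z).norm.bddAbove_range
    exact ⟨c, fun n => hc (Set.mem_range_self n)⟩
  exact ⟨C, fun n => by simpa using hC n⟩

theorem tendsto_inner_of_tendsto_of_forall_tendsto_inner {x y : ℕ → E} {x₀ : E} {ℓ : E → 𝕜}
    (hx : Tendsto x atTop (𝓝 x₀))
    (hy : ∀ z, Tendsto (fun n => inner 𝕜 (y n) z) atTop (𝓝 (ℓ z))) :
    Tendsto (fun n => inner 𝕜 (y n) (x n)) atTop (𝓝 (ℓ x₀)) := by
  obtain ⟨C, hC⟩ := exists_norm_le_of_forall_tendsto_inner hy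
  have hsmall : Tendsto (fun n => inner 𝕜 (y n) (x n - x₀)) atTop (𝓝 0) := by
    refine squeeze_zero_norm (fun n => ?_)
      (by simpa using (tendsto_iff_norm_sub_tendsto_zero.1 hx).const_mul C)
    calc ‖inner 𝕜 (y n) (x n - x₀)‖ ≤ ‖y n‖ * ‖x n - x₀‖ := norm_inner_le_norm _ _
      _ ≤ C * ‖x n - x₀‖ := by gcongr; exact hC n
  simpa [inner_sub_right] using hsmall.add (hy x₀)

end InnerProductSpace

section L2

variable {α : Type*} [MeasurableSpace α] {μ : Measure α}

theorem MeasureTheory.MemLp.inner_toLp_eq_integral_mul {u v : α → ℝ} (hu : MemLp u 2 μ)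
    (hv : MemLp v 2 μ) : inner ℝ (hu.toLp u) (hv.toLp v) = ∫ x, u x * v x ∂μ := by
  rw [L2.inner_def]
  refine integral_congr_ae ?_
  filter_upwards [hu.coeFn_toLp, hv.coeFn_toLp] with x hux hvx
  simp [hux, hvx, mul_comm]

theorem MeasureTheory.MemLp.norm_toLp_sq {u : α → ℝ} (hu : MemLp u 2 μ) :
    ‖hu.toLp u‖ ^ 2 = ∫ x, u x ^ 2 ∂μ := by
  simp_rw [← real_inner_self_eq_norm_sq, hu.inner_toLp_eq_integral_mul hu, sq]

theorem tendsto_toLp_of_tendsto_integral_sq_sub {u : ℕ → α → ℝ} {u₀ : α → ℝ}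
    (hu : ∀ n, MemLp (u n) 2 μ) (hu₀ : MemLp u₀ 2 μ)
    (h : Tendsto (fun n => ∫ x, (u n x - u₀ x) ^ 2 ∂μ) atTop (𝓝 0)) :
    Tendsto (fun n => (hu n).toLp (u n)) atTop (𝓝 (hu₀.toLp u₀)) := by
  have hnorm : ∀ n, ‖(hu n).toLp (u n) - hu₀.toLp u₀‖ = √(∫ x, (u n x - u₀ x) ^ 2 ∂μ) := by
    intro n
    rw [← MemLp.toLp_sub, ← Real.sqrt_sq (norm_nonneg _), ((hu n).sub hu₀).norm_toLp_sq]
    rfl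
  rw [tendsto_iff_norm_sub_tendsto_zero]
  simpa [hnorm] using h.sqrt

theorem tendsto_integral_mul_of_tendsto_integral_sq_sub_of_weak {u v : ℕ → α → ℝ}
    {u₀ v₀ : α → ℝ} (hu : ∀ n, MemLp (u n) 2 μ) (hu₀ : MemLp u₀ 2 μ) (hv : ∀ n, MemLp (v n) 2 μ)
    (hstrong : Tendsto (fun n => ∫ x, (u n x - u₀ x) ^ 2 ∂μ) atTop (𝓝 0))
    (hweak : ∀ φ, MemLp φ 2 μ →
      Tendsto (fun n => ∫ x, v n x * φ x ∂μ) atTop (𝓝 (∫ x, v₀ x * φ x ∂μ))) :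
    Tendsto (fun n => ∫ x, u n x * v n x ∂μ) atTop (𝓝 (∫ x, u₀ x * v₀ x ∂μ)) := by
  have hweakLp : ∀ z : Lp ℝ 2 μ, Tendsto (fun n => inner ℝ ((hv n).toLp (v n)) z) atTop
      (𝓝 (∫ x, v₀ x * z x ∂μ)) := by
    intro z
    convert hweak z (Lp.memLp z) using 2 with n
    conv_lhs => rw [← Lp.toLp_coeFn z (Lp.memLp z)]
    exact (hv n).inner_toLp_eq_integral_mul _
  have hlim := tendsto_inner_of_tendsto_of_forall_tendsto_inner
    (tendsto_toLp_of_tendsto_integral_sq_sub hu hu₀ hstrong) hweakLp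
  simp_rw [MemLp.inner_toLp_eq_integral_mul, mul_comm (v _ _)] at hlim
  convert hlim using 2
  exact integral_congr_ae (hu₀.coeFn_toLp.mono fun x hx => by simp only [hx, mul_comm])

theorem tendsto_integral_sq_indicator_sub_indicator {s : ℕ → Set α} {t : Set α}
    (hs : ∀ n, MeasurableSet (s n)) (ht : MeasurableSet t)
    (hweak : ∀ φ : α → ℝ, Integrable φ μ →
      Tendsto (fun n => ∫ x, (s n).indicator φ x ∂μ) atTop (𝓝 (∫ x, t.indicator φ x ∂μ)))
    {f : α → ℝ} (hf : MemLp f 2 μ) :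
    Tendsto (fun n => ∫ x, ((s n).indicator f x - t.indicator f x) ^ 2 ∂μ) atTop (𝓝 0) := by
  set φ := fun x => f x ^ 2
  have hφ : Integrable φ μ := hf.integrable_sq
  have hψ : Integrable (t.indicator φ) μ := hφ.indicator ht
  have hexpand : ∀ n, ∫ x, ((s n).indicator f x - t.indicator f x) ^ 2 ∂μ =
      ∫ x, (s n).indicator φ x ∂μ - 2 * ∫ x, (s n).indicator (t.indicator φ) x ∂μ
        + ∫ x, t.indicator φ x ∂μ := by
    intro n
    have h₁ : Integrable (fun x => 2 * (s n).indicator (t.indicator φ) x) μ :=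
      (hψ.indicator (hs n)).const_mul 2
    have h₂ : Integrable (fun x => (s n).indicator φ x - 2 * (s n).indicator (t.indicator φ) x) μ :=
      (hφ.indicator (hs n)).sub h₁
    rw [← integral_const_mul, ← integral_sub (hφ.indicator (hs n)) h₁, ← integral_add h₂ hψ]
    congr 1 with x
    by_cases hxs : x ∈ s n <;> by_cases hxt : x ∈ t <;> simp [hxs, hxt, φ]
    ring
  have hlim := ((hweak φ hφ).sub ((hweak _ hψ).const_mul 2)).add_const (∫ x, t.indicator φ x ∂μ)
  rw [Set.indicator_indicator, Set.inter_self] at hlim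
  simp_rw [hexpand]
  convert hlim using 2
  ring

theorem tendsto_integral_sq_indicator_sub_indicator_of_tendsto {s : ℕ → Set α} {t : Set α}
    (hs : ∀ n, MeasurableSet (s n)) (ht : MeasurableSet t)
    (hweak : ∀ φ : α → ℝ, Integrable φ μ →
      Tendsto (fun n => ∫ x, (s n).indicator φ x ∂μ) atTop (𝓝 (∫ x, t.indicator φ x ∂μ)))
    {fn : ℕ → α → ℝ} {f : α → ℝ} (hfn : ∀ n, MemLp (fn n) 2 μ) (hf : MemLp f 2 μ)
    (hstrong : Tendsto (fun n => ∫ x, (fn n x - f x) ^ 2 ∂μ) atTop (𝓝 0)) :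
    Tendsto (fun n => ∫ x, ((s n).indicator (fn n) x - t.indicator f x) ^ 2 ∂μ) atTop (𝓝 0) := by
  have hbound : ∀ n, ∫ x, ((s n).indicator (fn n) x - t.indicator f x) ^ 2 ∂μ ≤
      2 * ∫ x, (fn n x - f x) ^ 2 ∂μ + 2 * ∫ x, ((s n).indicator f x - t.indicator f x) ^ 2 ∂μ := by
    intro n
    have h₁ : Integrable (fun x => 2 * (fn n x - f x) ^ 2) μ :=
      ((hfn n).sub hf).integrable_sq.const_mul 2
    have h₂ : Integrable (fun x => 2 * ((s n).indicator f x - t.indicator f x) ^ 2) μ :=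
      (((hf.indicator (hs n)).sub (hf.indicator ht)).integrable_sq).const_mul 2
    rw [← integral_const_mul, ← integral_const_mul, ← integral_add h₁ h₂]
    refine integral_mono (((hfn n).indicator (hs n)).sub (hf.indicator ht)).integrable_sq
      (h₁.add h₂) fun x => ?_
    have hsplit : (s n).indicator (fn n) x - t.indicator f x =
        (s n).indicator (fn n - f) x + ((s n).indicator f x - t.indicator f x) := by
      by_cases hx : x ∈ s n <;> simp [hx]
    have hle : (s n).indicator (fn n - f) x ^ 2 ≤ (fn n x - f x) ^ 2 := by
      by_cases hx : x ∈ s n <;> simp [hx, sq_nonneg]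
    simp only [hsplit]
    nlinarith [sq_nonneg ((s n).indicator (fn n - f) x - ((s n).indicator f x - t.indicator f x))]
  refine squeeze_zero (fun n => integral_nonneg fun x => sq_nonneg _) hbound ?_
  simpa using (hstrong.const_mul 2).add
    ((tendsto_integral_sq_indicator_sub_indicator hs ht hweak hf).const_mul 2)

end L2

theorem tendsto_integral_char_mul_strong_mul_weak_general
    (D : Set (Fin 2 → ℝ))
    (Ω : Set (Fin 2 → ℝ)) (Ωn : ℕ → Set (Fin 2 → ℝ))
    (hΩ : MeasurableSet Ω)
    (hΩn : ∀ n, MeasurableSet (Ωn n))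
    (hweakstar : ∀ φ : (Fin 2 → ℝ) → ℝ, Integrable φ (volume.restrict D) →
      Tendsto (fun n => ∫ x, Set.indicator (Ωn n) (fun _ => (1 : ℝ)) x * φ x
          ∂(volume.restrict D)) atTop
        (𝓝 (∫ x, Set.indicator Ω (fun _ => (1 : ℝ)) x * φ x ∂(volume.restrict D))))
    (f g : (Fin 2 → ℝ) → ℝ) (fn gn : ℕ → (Fin 2 → ℝ) → ℝ)
    (hf : MemLp f 2 (volume.restrict D))
    (hfn : ∀ n, MemLp (fn n) 2 (volume.restrict D))
    (hgn : ∀ n, MemLp (gn n) 2 (volume.restrict D))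
    (hfstrong : Tendsto (fun n => ∫ x, (fn n x - f x)^2 ∂(volume.restrict D)) atTop (𝓝 0))
    (hgweak : ∀ φ : (Fin 2 → ℝ) → ℝ, MemLp φ 2 (volume.restrict D) →
      Tendsto (fun n => ∫ x, gn n x * φ x ∂(volume.restrict D)) atTop
        (𝓝 (∫ x, g x * φ x ∂(volume.restrict D)))) :
    Tendsto (fun n => ∫ x, Set.indicator (Ωn n) (fun _ => (1 : ℝ)) x * fn n x * gn n x
        ∂(volume.restrict D)) atTop
      (𝓝 (∫ x, Set.indicator Ω (fun _ => (1 : ℝ)) x * f x * g x ∂(volume.restrict D))) := by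
  have hweak : ∀ φ : (Fin 2 → ℝ) → ℝ, Integrable φ (volume.restrict D) →
      Tendsto (fun n => ∫ x, (Ωn n).indicator φ x ∂(volume.restrict D)) atTop
        (𝓝 (∫ x, Ω.indicator φ x ∂(volume.restrict D))) := by
    simpa only [← Set.indicator_mul_left, one_mul] using hweakstar
  have hstrong :=
    tendsto_integral_sq_indicator_sub_indicator_of_tendsto hΩn hΩ hweak hfn hf hfstrong
  simpa only [← Set.indicator_mul_left, one_mul] using
    tendsto_integral_mul_of_tendsto_integral_sq_sub_of_weak
      (fun n => (hfn n).indicator (hΩn n)) (hf.indicator hΩ) hgn hstrong hgweak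

theorem tendsto_integral_char_mul_strong_mul_weak
    (D : Set (Fin 2 → ℝ)) (hD : MeasurableSet D) (hDfin : volume D < ⊤)
    (Ω : Set (Fin 2 → ℝ)) (Ωn : ℕ → Set (Fin 2 → ℝ))
    (hΩ : MeasurableSet Ω) (hΩD : Ω ⊆ D)
    (hΩn : ∀ n, MeasurableSet (Ωn n)) (hΩnD : ∀ n, Ωn n ⊆ D)
    (hweakstar : ∀ φ : (Fin 2 → ℝ) → ℝ, Integrable φ (volume.restrict D) →
      Tendsto (fun n => ∫ x, Set.indicator (Ωn n) (fun _ => (1 : ℝ)) x * φ x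
          ∂(volume.restrict D)) atTop
        (𝓝 (∫ x, Set.indicator Ω (fun _ => (1 : ℝ)) x * φ x ∂(volume.restrict D))))
    (f g : (Fin 2 → ℝ) → ℝ) (fn gn : ℕ → (Fin 2 → ℝ) → ℝ)
    (hf : MemLp f 2 (volume.restrict D)) (hg : MemLp g 2 (volume.restrict D))
    (hfn : ∀ n, MemLp (fn n) 2 (volume.restrict D))
    (hgn : ∀ n, MemLp (gn n) 2 (volume.restrict D))
    (hfstrong : Tendsto (fun n => ∫ x, (fn n x - f x)^2 ∂(volume.restrict D)) atTop (𝓝 0))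
    (hgweak : ∀ φ : (Fin 2 → ℝ) → ℝ, MemLp φ 2 (volume.restrict D) →
      Tendsto (fun n => ∫ x, gn n x * φ x ∂(volume.restrict D)) atTop
        (𝓝 (∫ x, g x * φ x ∂(volume.restrict D)))) :
    Tendsto (fun n => ∫ x, Set.indicator (Ωn n) (fun _ => (1 : ℝ)) x * fn n x * gn n x
        ∂(volume.restrict D)) atTop
      (𝓝 (∫ x, Set.indicator Ω (fun _ => (1 : ℝ)) x * f x * g x ∂(volume.restrict D))) :=
  tendsto_integral_char_mul_strong_mul_weak_general D Ω Ωn hΩ hΩn hweakstar f g fn gn hf hfn hgn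
    hfstrong hgweak
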